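/- Define the basic sequence Q = (q_n) and digit sequence E = (E_n) by grouping the indices into consecutive blocks, the m-th block having length m (so Q = (2, 4,4, 6,6,6, 8,8,8,8, …) and E = (0, 0,2, 0,2,4, 0,2,4,6, …)): for the i-th index n of the m-th block (1 ≤ i ≤ m), q_n = 2m and E_n = 2(i−1). Let x = ∑_{n=1}^∞ E_n/(q_1 q_2 ⋯ q_n). Then x is Q-distribution normal but x/2 is not Q-distribution normal. -/

import Mathlib

open Filter Finset MeasureTheory

noncomputable section
open scoped Classical

/-- `cantorProd q n = q 1 * q 2 * ... * q n` (empty product for `n = 0`). -/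
def cantorProd (q : ℕ → ℕ) (n : ℕ) : ℕ := ∏ j ∈ Finset.Icc 1 n, q j

/-- `T_{Q,n}(x) = q_1 q_2 ⋯ q_n · x (mod 1)`. -/
def TQ (q : ℕ → ℕ) (n : ℕ) (x : ℝ) : ℝ := Int.fract ((cantorProd q n : ℝ) * x)

/-- A basic sequence: `q n ≥ 2` for all `n ≥ 1`. -/
def BasicSeq (q : ℕ → ℕ) : Prop := ∀ n, 1 ≤ n → 2 ≤ q n

/-- `Q` is infinite in limit: `q n → ∞`. -/
def InfiniteInLimit (q : ℕ → ℕ) : Prop := Filter.Tendsto q Filter.atTop Filter.atTop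

/-- `E` (indexed from 1) is the sequence of digits of the `Q`-Cantor series expansion of `x`:
`E n ∈ {0, …, q n − 1}`, `E n ≠ q n − 1` infinitely often, and
`x = ⌊x⌋ + ∑_{n ≥ 1} E n / (q 1 ⋯ q n)`. -/
def IsCantorDigits (q : ℕ → ℕ) (E : ℕ → ℕ) (x : ℝ) : Prop :=
  (∀ n, 1 ≤ n → E n < q n) ∧
  {n | 1 ≤ n ∧ E n ≠ q n - 1}.Infinite ∧
  x = (⌊x⌋ : ℝ) + ∑' n : ℕ, (E (n + 1) : ℝ) / (cantorProd q (n + 1) : ℝ)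

/-- `Q_n^{(k)} = ∑_{j=1}^n 1/(q_j q_{j+1} ⋯ q_{j+k-1})`. -/
def Qnk (q : ℕ → ℕ) (k n : ℕ) : ℝ :=
  ∑ j ∈ Finset.Icc 1 n, 1 / ∏ i ∈ Finset.Ico j (j + k), (q i : ℝ)

/-- `Q` is `k`-divergent. -/
def KDivergent (q : ℕ → ℕ) (k : ℕ) : Prop :=
  Filter.Tendsto (fun n => Qnk q k n) Filter.atTop Filter.atTop

/-- `N_n^Q(B, x)`: the number of indices `1 ≤ i ≤ n - |B| + 1` at which the block `B`
occurs in the digit sequence `E`. -/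
def blockCount (E : ℕ → ℕ) (B : List ℕ) (n : ℕ) : ℕ :=
  ((Finset.Icc 1 (n + 1 - B.length)).filter
    (fun i => ∀ t, t < B.length → E (i + t) = B.getD t 0)).card

/-- The digit sequence `E` is `Q`-normal of order `k`. -/
def QNormalOfOrder (q : ℕ → ℕ) (E : ℕ → ℕ) (k : ℕ) : Prop :=
  ∀ B : List ℕ, B.length = k →
    Filter.Tendsto (fun n => (blockCount E B n : ℝ) / Qnk q k n) Filter.atTop (nhds 1)

/-- A sequence (indexed from 0) is uniformly distributed mod 1. -/
def UDMod1 (z : ℕ → ℝ) : Prop :=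
  ∀ a b : ℝ, 0 ≤ a → a < b → b ≤ 1 →
    Filter.Tendsto
      (fun N => (((Finset.range N).filter (fun n => Int.fract (z n) ∈ Set.Ico a b)).card : ℝ) / N)
      Filter.atTop (nhds (b - a))

/-- `x` is `Q`-distribution normal: `(T_{Q,n}(x))_{n ≥ 0}` is uniformly distributed mod 1. -/
def QDistNormal (q : ℕ → ℕ) (x : ℝ) : Prop := UDMod1 (fun n => TQ q n x)

/-- A set of natural numbers has (natural) density zero. -/
def DensityZero (A : Set ℕ) : Prop :=
  Filter.Tendsto (fun N => (((Finset.Icc 1 N).filter (fun n => n ∈ A)).card : ℝ) / N)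
    Filter.atTop (nhds 0)

/-- The `n`-th digit (for `n ≥ 1`) of the `Q`-Cantor series expansion of `x`,
extracted via `E_n = ⌊q_n · T_{Q,n-1}(x)⌋`. -/
def cantorDigit (q : ℕ → ℕ) (x : ℝ) (n : ℕ) : ℤ := ⌊(q n : ℝ) * TQ q (n - 1) x⌋

/-- `ψ_{P,Q}(x) = ∑_{n ≥ 1} min(E_n, q_n − 1)/(q_1 ⋯ q_n)`, where `E` are the `P`-digits of `x`. -/
def psiMap (p q : ℕ → ℕ) (x : ℝ) : ℝ :=
  ∑' n : ℕ, ((min (cantorDigit p x (n + 1)) ((q (n + 1) : ℤ) - 1) : ℤ) : ℝ) /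
    (cantorProd q (n + 1) : ℝ)

/-- `N_n^Q(B, x)` defined via the canonical digits of the real number `x`. -/
def blockCountReal (q : ℕ → ℕ) (x : ℝ) (B : List ℕ) (n : ℕ) : ℕ :=
  ((Finset.Icc 1 (n + 1 - B.length)).filter
    (fun i => ∀ t, t < B.length → cantorDigit q x (i + t) = (B.getD t 0 : ℤ))).card

/-- The real number `x` is `Q`-normal of order `k`. -/
def QNormalOfOrderReal (q : ℕ → ℕ) (x : ℝ) (k : ℕ) : Prop :=
  ∀ B : List ℕ, B.length = k →
    Filter.Tendsto (fun n => (blockCountReal q x B n : ℝ) / Qnk q k n) Filter.atTop (nhds 1)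

/-- The discrepancy `D_N` of the finite sequence `x 1, …, x N` (of numbers in `[0,1)`). -/
def discrepancy (N : ℕ) (x : ℕ → ℝ) : ℝ :=
  sSup {d : ℝ | ∃ a b : ℝ, 0 ≤ a ∧ a ≤ b ∧ b ≤ 1 ∧
    d = |(((Finset.Icc 1 N).filter (fun n => x n ∈ Set.Ico a b)).card : ℝ) / N - (b - a)|}

/-- The block index `m` of position `n ≥ 1`: the least `m` with `n ≤ m(m+1)/2`, so that the
`m`-th block consists of the positions `m(m-1)/2 < n ≤ m(m+1)/2` (the `m`-th block has
length `m`). -/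
def blockM (n : ℕ) : ℕ :=
  Nat.find (⟨n, by
    rcases Nat.eq_zero_or_pos n with h | h
    · simp [h]
    · exact (Nat.le_div_iff_mul_le (by norm_num)).mpr (by nlinarith)⟩ :
      ∃ m, n ≤ m * (m + 1) / 2)

/-- The basic sequence `Q = (2, 4, 4, 6, 6, 6, 8, 8, 8, 8, …)`: `q_n = 2m` on the `m`-th block. -/
def exQ : ℕ → ℕ := fun n => 2 * blockM n

/-- The digit sequence `E = (0, 0, 2, 0, 2, 4, 0, 2, 4, 6, …)`: at the `i`-th position of the
`m`-th block (`1 ≤ i ≤ m`), `E_n = 2(i-1)` where `i = n - m(m-1)/2`. -/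
def exE : ℕ → ℕ := fun n => 2 * (n - blockM n * (blockM n - 1) / 2 - 1)

/-!
Let `t n = ∑_{j ≥ 0} E_{n+1+j} / (q_{n+1} ⋯ q_{n+1+j})` be the tail of the Cantor series. Then
`q_1 ⋯ q_n x` is an integer plus `t n ∈ [0, 1)`, so `T_{Q,n}(x) = t n`, and
`t n = (E_{n+1} + t (n+1)) / q_{n+1}`. On the block of length `m`, where `q = 2m` and `E` runs
through `0, 2, …, 2m - 2`, this puts exactly one point of the orbit in each interval
`[i/m, (i+1)/m)`. Such a block meets any `[a, b)` in `m (b - a) + O(1)` points, and the first `N`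
points of the orbit span only `O(√N)` blocks, so the orbit is uniformly distributed.

All digits are even, so the integer part of `q_1 ⋯ q_n x` is even and `T_{Q,n}(x/2) = t n / 2`,
which never enters `[1/2, 1)`.
-/

def triangular (m : ℕ) : ℕ := m * (m + 1) / 2

theorem triangular_succ (m : ℕ) : triangular (m + 1) = triangular m + (m + 1) := by
  unfold triangular
  rw [show (m + 1) * (m + 1 + 1) = m * (m + 1) + (m + 1) * 2 by ring,
    Nat.add_mul_div_right _ _ two_pos]

theorem triangular_monotone : Monotone triangular :=
  monotone_nat_of_le_succ fun m => by rw [triangular_succ]; omega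

theorem mul_self_le_two_mul_triangular (m : ℕ) : m * m ≤ 2 * triangular m := by
  rw [triangular, Nat.mul_div_cancel' (Nat.even_mul_succ_self m).two_dvd]
  exact Nat.mul_le_mul_left m m.le_succ

theorem exists_eq_triangular_add (N : ℕ) : ∃ m i, i ≤ m ∧ N = triangular m + i := by
  induction N with
  | zero => exact ⟨0, 0, le_rfl, rfl⟩
  | succ N ih =>
    obtain ⟨m, i, him, rfl⟩ := ih
    by_cases him' : i < m
    · exact ⟨m, i + 1, him', rfl⟩
    · exact ⟨m + 1, 0, (m + 1).zero_le, by rw [triangular_succ]; omega⟩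

section UniformDistribution

open Set

theorem abs_card_filter_mem_Ico_sub_le {M : ℕ} {y : ℕ → ℝ}
    (hy : ∀ i < M, y i ∈ Ico (i / M : ℝ) ((i + 1) / M)) {a b : ℝ} (ha : 0 ≤ a) (hab : a ≤ b)
    (hb : b ≤ 1) : |(#{i ∈ range M | y i ∈ Ico a b} : ℝ) - M * (b - a)| ≤ 2 := by
  rcases Nat.eq_zero_or_pos M with rfl | hM
  · simp
  have hM' : (0 : ℝ) < M := by exact_mod_cast hM
  have haM : 0 ≤ a * M := by positivity
  have hbM : 0 ≤ b * M := mul_nonneg (ha.trans hab) hM'.le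
  have upper : #{i ∈ range M | y i ∈ Ico a b} ≤ #(Ico ⌊a * M⌋₊ ⌈b * M⌉₊) := by
    refine card_le_card fun i hi => ?_
    obtain ⟨hiM, hya, hyb⟩ := by simpa using hi
    obtain ⟨hyi, hyi'⟩ := hy i hiM
    rw [div_le_iff₀ hM'] at hyi
    rw [lt_div_iff₀ hM'] at hyi'
    refine Finset.mem_Ico.2 ⟨Nat.lt_succ_iff.1 ((Nat.floor_lt' i.succ_ne_zero).2 ?_),
      Nat.lt_ceil.2 ?_⟩
    · push_cast; nlinarith
    · nlinarith
  have lower : #(Ico ⌈a * M⌉₊ ⌊b * M⌋₊) ≤ #{i ∈ range M | y i ∈ Ico a b} := by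
    refine card_le_card fun i hi => ?_
    obtain ⟨hai, hib⟩ := Finset.mem_Ico.1 hi
    have hai : a * M ≤ i := Nat.ceil_le.1 hai
    have hib : ((i + 1 : ℕ) : ℝ) ≤ b * M := (Nat.le_floor_iff hbM).1 hib
    push_cast at hib
    have hiM : i < M := by
      have : (i : ℝ) < M := by nlinarith
      exact_mod_cast this
    obtain ⟨hyi, hyi'⟩ := hy i hiM
    refine Finset.mem_filter.2 ⟨Finset.mem_range.2 hiM, ?_, ?_⟩
    · exact ((le_div_iff₀ hM').2 hai).trans hyi
    · exact hyi'.trans_le ((div_le_iff₀ hM').2 hib)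
  rw [Nat.card_Ico] at upper lower
  have hfc : ⌊a * M⌋₊ ≤ ⌈b * M⌉₊ :=
    (Nat.floor_le_floor (by gcongr)).trans (Nat.floor_le_ceil _)
  have upper' : (#{i ∈ range M | y i ∈ Ico a b} : ℝ) + ⌊a * M⌋₊ ≤ ⌈b * M⌉₊ := by
    exact_mod_cast (by omega : _ ≤ _)
  have lower' : (⌊b * M⌋₊ : ℝ) ≤ #{i ∈ range M | y i ∈ Ico a b} + ⌈a * M⌉₊ := by
    exact_mod_cast (by omega : _ ≤ _)
  rw [abs_sub_le_iff]
  constructor <;> linarith [Nat.sub_one_lt_floor (a * M), Nat.ceil_lt_add_one hbM,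
    Nat.sub_one_lt_floor (b * M), Nat.ceil_lt_add_one haM]

section TriangularBlocks

variable {P : ℕ → Prop} [DecidablePred P] {c : ℝ}

theorem abs_count_triangular_sub_le
    (hblock : ∀ m, |(Nat.count (fun i => P (triangular m + i)) (m + 1) : ℝ) - (m + 1) * c| ≤ 2)
    (m : ℕ) : |(Nat.count P (triangular m) : ℝ) - triangular m * c| ≤ 2 * m := by
  induction m with
  | zero => simp [triangular]
  | succ m ih =>
    rw [triangular_succ, Nat.count_add]
    push_cast
    calc _ = |((Nat.count P (triangular m) : ℝ) - triangular m * c) +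
            ((Nat.count (fun i => P (triangular m + i)) (m + 1) : ℝ) - (m + 1) * c)| := by
          ring_nf
      _ ≤ 2 * m + 2 := (abs_add_le _ _).trans (add_le_add ih (hblock m))
      _ = 2 * (m + 1) := by ring

theorem exists_abs_count_sub_le (hc₀ : 0 ≤ c) (hc₁ : c ≤ 1)
    (hblock : ∀ m, |(Nat.count (fun i => P (triangular m + i)) (m + 1) : ℝ) - (m + 1) * c| ≤ 2)
    (N : ℕ) : ∃ m : ℕ, |(Nat.count P N : ℝ) - N * c| ≤ 3 * m ∧ (m * m : ℝ) ≤ 2 * N := by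
  obtain ⟨m, i, him, rfl⟩ := exists_eq_triangular_add N
  refine ⟨m, ?_, ?_⟩
  · rw [Nat.count_add]
    have hpart : (Nat.count (fun k => P (triangular m + k)) i : ℝ) ≤ i := by
      exact_mod_cast Nat.count_le _
    have him : (i : ℝ) ≤ m := by exact_mod_cast him
    have hm := abs_count_triangular_sub_le hblock m
    push_cast
    rw [abs_le] at hm ⊢
    constructor <;> nlinarith
  · have := mul_self_le_two_mul_triangular m
    exact_mod_cast (by omega : m * m ≤ 2 * (triangular m + i))

theorem tendsto_count_div_of_triangular_blocks (hc₀ : 0 ≤ c) (hc₁ : c ≤ 1)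
    (hblock : ∀ m, |(Nat.count (fun i => P (triangular m + i)) (m + 1) : ℝ) - (m + 1) * c| ≤ 2) :
    Tendsto (fun N => (Nat.count P N : ℝ) / N) atTop (nhds c) := by
  have hsqrt : Tendsto (fun N : ℕ => 5 / √(N : ℝ)) atTop (nhds 0) :=
    tendsto_const_nhds.div_atTop (Real.tendsto_sqrt_atTop.comp tendsto_natCast_atTop_atTop)
  refine tendsto_iff_norm_sub_tendsto_zero.2
    (squeeze_zero' (.of_forall fun _ => norm_nonneg _) ?_ hsqrt)
  filter_upwards [eventually_gt_atTop 0] with N hN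
  obtain ⟨m, hm, hmN⟩ := exists_abs_count_sub_le hc₀ hc₁ hblock N
  have hN : (0 : ℝ) < N := by exact_mod_cast hN
  have hs : 0 < √(N : ℝ) := Real.sqrt_pos.2 hN
  have hss : √(N : ℝ) * √(N : ℝ) = N := Real.mul_self_sqrt hN.le
  have h3m : 3 * (m : ℝ) ≤ 5 * √(N : ℝ) := by nlinarith [m.cast_nonneg (α := ℝ)]
  rw [Real.norm_eq_abs, div_sub' hN.ne', abs_div, abs_of_pos hN, div_le_div_iff₀ hN hs]
  calc _ ≤ 3 * (m : ℝ) * √(N : ℝ) := mul_le_mul_of_nonneg_right hm hs.le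
    _ ≤ 5 * √(N : ℝ) * √(N : ℝ) := by gcongr
    _ = 5 * N := by rw [mul_assoc, hss]

end TriangularBlocks

theorem udMod1_of_fract_mem_triangular_blocks {z : ℕ → ℝ}
    (hz : ∀ m i : ℕ, i ≤ m →
      Int.fract (z (triangular m + i)) ∈ Ico (i / (m + 1) : ℝ) ((i + 1) / (m + 1))) :
    UDMod1 z := by
  intro a b ha hab hb
  simp_rw [← Nat.count_eq_card_filter_range]
  refine tendsto_count_div_of_triangular_blocks (by linarith) (by linarith) fun m => ?_
  rw [Nat.count_eq_card_filter_range]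
  exact_mod_cast abs_card_filter_mem_Ico_sub_le (M := m + 1)
    (fun i hi => by exact_mod_cast hz m i (Nat.lt_succ_iff.1 hi)) ha hab.le hb

theorem not_udMod1_of_forall_fract_notMem {z : ℕ → ℝ} {a b : ℝ} (ha : 0 ≤ a) (hab : a < b)
    (hb : b ≤ 1) (hz : ∀ n, Int.fract (z n) ∉ Ico a b) : ¬ UDMod1 z := fun h => by
  have := h a b ha hab hb
  simp only [filter_false_of_mem fun n _ => hz n, Finset.card_empty, Nat.cast_zero,
    zero_div] at this
  exact (sub_pos.2 hab).ne (tendsto_nhds_unique tendsto_const_nhds this)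

end UniformDistribution

def cantorTerm (q E : ℕ → ℕ) (n j : ℕ) : ℝ :=
  (E (n + 1 + j) : ℝ) / ∏ i ∈ Icc (n + 1) (n + 1 + j), (q i : ℝ)

def cantorTail (q E : ℕ → ℕ) (n : ℕ) : ℝ := ∑' j, cantorTerm q E n j

def cantorNum (q E : ℕ → ℕ) : ℕ → ℕ
  | 0 => 0
  | n + 1 => q (n + 1) * cantorNum q E n + E (n + 1)

theorem cantorProd_succ (q : ℕ → ℕ) (n : ℕ) : cantorProd q (n + 1) = cantorProd q n * q (n + 1) :=
  prod_Icc_succ_top (by omega) q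

section CantorTail

variable {q E : ℕ → ℕ}

theorem cantorTerm_nonneg (n j : ℕ) : 0 ≤ cantorTerm q E n j := by
  unfold cantorTerm; positivity

theorem cantorTerm_zero (n : ℕ) : cantorTerm q E n 0 = E (n + 1) / q (n + 1) := by
  simp [cantorTerm]

theorem cantorTerm_succ (n j : ℕ) :
    cantorTerm q E n (j + 1) = cantorTerm q E (n + 1) j / q (n + 1) := by
  rw [cantorTerm, cantorTerm, Icc_eq_cons_Ioc (by omega), prod_cons, div_div, mul_comm,
    ← Finset.Icc_add_one_left_eq_Ioc, show n + 1 + (j + 1) = n + 1 + 1 + j by omega]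

theorem cantorTerm_le (hE : ∀ n, E (n + 1) + 2 ≤ q (n + 1)) (n j : ℕ) :
    cantorTerm q E n j ≤ (1 / 2) ^ j := by
  induction j generalizing n with
  | zero =>
    have : (E (n + 1) : ℝ) + 2 ≤ q (n + 1) := by exact_mod_cast hE n
    rw [cantorTerm_zero, pow_zero, div_le_one (by linarith [(E (n + 1)).cast_nonneg (α := ℝ)])]
    linarith
  | succ j ih =>
    have : (2 : ℝ) ≤ q (n + 1) := by exact_mod_cast (le_add_self.trans (hE n))
    rw [cantorTerm_succ, pow_succ, div_le_iff₀ (by linarith)]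
    calc cantorTerm q E (n + 1) j ≤ (1 / 2) ^ j := ih (n + 1)
      _ ≤ (1 / 2) ^ j * (1 / 2) * q (n + 1) := by
        rw [mul_assoc]; exact le_mul_of_one_le_right (by positivity) (by linarith)

theorem summable_cantorTerm (hE : ∀ n, E (n + 1) + 2 ≤ q (n + 1)) (n : ℕ) :
    Summable (cantorTerm q E n) :=
  .of_nonneg_of_le (cantorTerm_nonneg n) (cantorTerm_le hE n) summable_geometric_two

theorem cantorTail_nonneg (n : ℕ) : 0 ≤ cantorTail q E n :=
  tsum_nonneg (cantorTerm_nonneg n)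

theorem cantorTail_le_two (hE : ∀ n, E (n + 1) + 2 ≤ q (n + 1)) (n : ℕ) :
    cantorTail q E n ≤ 2 :=
  tsum_geometric_two ▸ (summable_cantorTerm hE n).tsum_le_tsum (cantorTerm_le hE n)
    summable_geometric_two

theorem cantorTail_eq (hE : ∀ n, E (n + 1) + 2 ≤ q (n + 1)) (n : ℕ) :
    cantorTail q E n = (E (n + 1) + cantorTail q E (n + 1)) / q (n + 1) := by
  rw [cantorTail, (summable_cantorTerm hE n).tsum_eq_zero_add, cantorTerm_zero]
  simp_rw [cantorTerm_succ, div_eq_mul_inv, tsum_mul_right, cantorTail, add_mul]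

theorem cantorTail_le_one (hE : ∀ n, E (n + 1) + 2 ≤ q (n + 1)) (n : ℕ) :
    cantorTail q E n ≤ 1 := by
  have : (E (n + 1) : ℝ) + 2 ≤ q (n + 1) := by exact_mod_cast hE n
  rw [cantorTail_eq hE, div_le_one (by linarith [(E (n + 1)).cast_nonneg (α := ℝ)])]
  linarith [cantorTail_le_two hE (n + 1)]

theorem cantorTail_lt_one (hE : ∀ n, E (n + 1) + 2 ≤ q (n + 1)) (n : ℕ) :
    cantorTail q E n < 1 := by
  have : (E (n + 1) : ℝ) + 2 ≤ q (n + 1) := by exact_mod_cast hE n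
  rw [cantorTail_eq hE, div_lt_one (by linarith [(E (n + 1)).cast_nonneg (α := ℝ)])]
  linarith [cantorTail_le_one hE (n + 1)]

theorem cantorTail_mem_Ico (hE : ∀ n, E (n + 1) + 2 ≤ q (n + 1)) (n : ℕ) :
    cantorTail q E n ∈ Set.Ico (E (n + 1) / q (n + 1) : ℝ) ((E (n + 1) + 1) / q (n + 1)) := by
  have hq : (0 : ℝ) < q (n + 1) := Nat.cast_pos.2 (by have := hE n; omega)
  rw [cantorTail_eq hE]
  constructor
  · gcongr; linarith [cantorTail_nonneg (q := q) (E := E) (n + 1)]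
  · gcongr; exact cantorTail_lt_one hE (n + 1)

theorem tsum_div_cantorProd_eq_cantorTail :
    ∑' n : ℕ, (E (n + 1) : ℝ) / (cantorProd q (n + 1) : ℝ) = cantorTail q E 0 := by
  refine tsum_congr fun j => ?_
  simp only [cantorTerm, cantorProd, Nat.cast_prod, zero_add, add_comm 1 j]

theorem cantorProd_mul_cantorTail_zero (hE : ∀ n, E (n + 1) + 2 ≤ q (n + 1)) (n : ℕ) :
    cantorProd q n * cantorTail q E 0 = cantorNum q E n + cantorTail q E n := by
  induction n with
  | zero => simp [cantorProd, cantorNum]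
  | succ n ih =>
    have hq : (q (n + 1) : ℝ) ≠ 0 := Nat.cast_ne_zero.2 (by have := hE n; omega)
    rw [cantorProd_succ, Nat.cast_mul, mul_right_comm, ih, cantorTail_eq hE n, cantorNum]
    push_cast
    field_simp
    ring

theorem TQ_cantorTail_zero (hE : ∀ n, E (n + 1) + 2 ≤ q (n + 1)) (n : ℕ) :
    TQ q n (cantorTail q E 0) = cantorTail q E n := by
  rw [TQ, cantorProd_mul_cantorTail_zero hE, ← Int.cast_natCast, Int.fract_intCast_add,
    Int.fract_eq_self]
  exact ⟨cantorTail_nonneg n, cantorTail_lt_one hE n⟩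

theorem even_cantorNum (hE : ∀ n, Even (E (n + 1))) (n : ℕ) : Even (cantorNum q E n) := by
  induction n with
  | zero => exact .zero
  | succ n ih => exact (ih.mul_left _).add (hE n)

theorem TQ_cantorTail_zero_div_two (hE : ∀ n, E (n + 1) + 2 ≤ q (n + 1))
    (hEven : ∀ n, Even (E (n + 1))) (n : ℕ) :
    TQ q n (cantorTail q E 0 / 2) = cantorTail q E n / 2 := by
  obtain ⟨k, hk⟩ := even_cantorNum (q := q) hEven n
  have : (cantorProd q n : ℝ) * (cantorTail q E 0 / 2) = (k : ℤ) + cantorTail q E n / 2 := by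
    rw [mul_div_assoc', cantorProd_mul_cantorTail_zero hE, hk]; push_cast; ring
  rw [TQ, this, Int.fract_intCast_add, Int.fract_eq_self]
  constructor <;> linarith [cantorTail_nonneg (q := q) (E := E) n, cantorTail_lt_one hE n]

end CantorTail

theorem blockM_triangular_add_succ {m i : ℕ} (hi : i ≤ m) :
    blockM (triangular m + i + 1) = m + 1 := by
  unfold blockM
  rw [Nat.find_eq_iff]
  refine ⟨?_, fun k hk => ?_⟩
  · change _ ≤ triangular (m + 1)
    rw [triangular_succ]; omega
  · change ¬ _ ≤ triangular k
    have := triangular_monotone (Nat.lt_succ_iff.1 hk)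
    omega

theorem exQ_triangular_add_succ {m i : ℕ} (hi : i ≤ m) :
    exQ (triangular m + i + 1) = 2 * (m + 1) := by
  rw [exQ, blockM_triangular_add_succ hi]

theorem exE_triangular_add_succ {m i : ℕ} (hi : i ≤ m) :
    exE (triangular m + i + 1) = 2 * i := by
  have : (m + 1) * (m + 1 - 1) / 2 = triangular m := by
    rw [triangular, Nat.add_sub_cancel, mul_comm]
  rw [exE, blockM_triangular_add_succ hi, this]
  omega

theorem exE_add_two_le_exQ (n : ℕ) : exE (n + 1) + 2 ≤ exQ (n + 1) := by
  obtain ⟨m, i, hi, rfl⟩ := exists_eq_triangular_add n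
  rw [exE_triangular_add_succ hi, exQ_triangular_add_succ hi]
  omega

theorem cantorTail_exQ_exE_mem_Ico {m i : ℕ} (hi : i ≤ m) :
    cantorTail exQ exE (triangular m + i) ∈ Set.Ico (i / (m + 1) : ℝ) ((i + 1) / (m + 1)) := by
  have h := cantorTail_mem_Ico exE_add_two_le_exQ (triangular m + i)
  rw [exE_triangular_add_succ hi, exQ_triangular_add_succ hi] at h
  push_cast at h
  have hm : (0 : ℝ) < m + 1 := by positivity
  refine ⟨?_, h.2.trans_le ?_⟩
  · simpa only [mul_div_mul_left _ _ (two_ne_zero' ℝ)] using h.1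
  · rw [div_le_div_iff₀ (by positivity) hm]
    nlinarith

/-- for `x = ∑ E_n/(q_1 ⋯ q_n)` with the above `Q` and `E`, `x` is
`Q`-distribution normal but `x/2` is not. -/
theorem stmt_3 :
    QDistNormal exQ (∑' n : ℕ, (exE (n + 1) : ℝ) / (cantorProd exQ (n + 1) : ℝ)) ∧
    ¬ QDistNormal exQ ((∑' n : ℕ, (exE (n + 1) : ℝ) / (cantorProd exQ (n + 1) : ℝ)) / 2) := by
  have hE := exE_add_two_le_exQ
  have hfract (n : ℕ) : Int.fract (cantorTail exQ exE n) = cantorTail exQ exE n :=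
    Int.fract_eq_self.2 ⟨cantorTail_nonneg n, cantorTail_lt_one hE n⟩
  rw [tsum_div_cantorProd_eq_cantorTail]
  refine ⟨udMod1_of_fract_mem_triangular_blocks fun m i hi => ?_,
    not_udMod1_of_forall_fract_notMem (a := 1 / 2) (b := 1) (by norm_num) (by norm_num) le_rfl
      fun n => ?_⟩
  · rw [TQ_cantorTail_zero hE, hfract]
    exact cantorTail_exQ_exE_mem_Ico hi
  · rw [TQ_cantorTail_zero_div_two hE fun n => even_two_mul _, Int.fract_eq_self.2]
    · exact fun h => (cantorTail_lt_one hE n).not_ge (by linarith [h.1])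
    · constructor <;> linarith [cantorTail_nonneg (q := exQ) (E := exE) n, cantorTail_lt_one hE n]
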